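/- If A is a symmetric matrix of the block form A = [[0, C],[Cᵀ, 0]], then its group inverse is A# = [[0, (CCᵀ)# C],[Cᵀ (CCᵀ)#, 0]]. Consequently, the group inverse of a bipartite weighted graph is bipartite. -/

import Mathlib

open SimpleGraph Matrix

/-- `X` is the group inverse of `A`. -/
def IsGroupInverse {n : Type*} [Fintype n] (A X : Matrix n n ℝ) : Prop :=
  A * X * A = A ∧ X * A * X = X ∧ A * X = X * A

/-- A matching of a graph: a set of pairwise non-incident edges. -/
def IsMatching {V : Type*} (G : SimpleGraph V) (M : Finset (Sym2 V)) : Prop :=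
  (↑M : Set (Sym2 V)) ⊆ G.edgeSet ∧
    ∀ e ∈ M, ∀ f ∈ M, e ≠ f → ∀ v : V, ¬(v ∈ e ∧ v ∈ f)

/-- A maximum matching: a matching of maximum cardinality. -/
def IsMaxMatching {V : Type*} (G : SimpleGraph V) (M : Finset (Sym2 V)) : Prop :=
  IsMatching G M ∧ ∀ N : Finset (Sym2 V), IsMatching G N → N.card ≤ M.card

/-- A nonempty list of edges alternately in and out of `M`,
beginning and ending with edges of `M`. -/
def IsAltEdgeList {V : Type*} (M : Set (Sym2 V)) : List (Sym2 V) → Prop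
  | [] => False
  | [e] => e ∈ M
  | e :: f :: rest => e ∈ M ∧ f ∉ M ∧ IsAltEdgeList M rest

/-- A pair of vertices is maximally matchable if they are joined by a path that is
alternating with respect to some maximum matching. -/
def MaxMatchable {V : Type*} (G : SimpleGraph V) (u v : V) : Prop :=
  ∃ (p : G.Walk u v) (M : Finset (Sym2 V)),
    p.IsPath ∧ IsMaxMatching G M ∧ IsAltEdgeList (↑M) p.edges

/-- `G` is a star: some center `c` is adjacent to exactly the other vertices,
and there are no other edges. -/
def IsStar {V : Type*} (G : SimpleGraph V) : Prop :=
  ∃ c : V, ∀ u v : V, G.Adj u v ↔ ((u = c ∧ v ≠ c) ∨ (v = c ∧ u ≠ c))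

/-- The class 𝕋: trees with at least one non-pendant vertex in which every
non-pendant vertex is adjacent to a pendant vertex. -/
def InClassT {V : Type*} [Fintype V] (T : SimpleGraph V) [DecidableRel T.Adj] : Prop :=
  T.IsTree ∧ (∃ v, T.degree v ≠ 1) ∧
    ∀ v, T.degree v ≠ 1 → ∃ u, T.Adj v u ∧ T.degree u = 1

/-- The number of pendant neighbours of `v`. -/
def pendantNbrs {V : Type*} [Fintype V] [DecidableEq V] (T : SimpleGraph V)
    [DecidableRel T.Adj] (v : V) : ℕ :=
  ((T.neighborFinset v).filter fun u => T.degree u = 1).card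

/-! Since `M Mᵀ = 0` forces `M = 0` over the reals, `B C Cᵀ = 0` implies `B C = 0`; applied to
`B = C Cᵀ Y - 1` (and symmetrically) this turns `C Cᵀ Y C Cᵀ = C Cᵀ` into `C Cᵀ Y C = C` and
`Cᵀ Y C Cᵀ = Cᵀ`. With these two identities the three defining equations of the group inverse of the antidiagonal
block matrix `[[0, C], [Cᵀ, 0]]` are checked blockwise, and uniqueness of group inverses shows
that every group inverse of it has the same zero diagonal blocks. -/

theorem groupInverse_unique {S : Type*} [Semigroup S] {a b c : S}
    (hb : a * b * a = a ∧ b * a * b = b ∧ a * b = b * a)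
    (hc : a * c * a = a ∧ c * a * c = c ∧ a * c = c * a) : b = c := by
  obtain ⟨hb₁, hb₂, hb₃⟩ := hb
  obtain ⟨hc₁, hc₂, hc₃⟩ := hc
  have hab : a * b = a * c :=
    calc a * b = b * (a * c * a) := by rw [hb₃, hc₁]
      _ = b * a * (c * a) := by simp only [mul_assoc]
      _ = a * b * (a * c) := by rw [hb₃, hc₃]
      _ = a * b * a * c := by simp only [mul_assoc]
      _ = a * c := by rw [hb₁]
  calc b = b * (a * b) := by rw [← mul_assoc, hb₂]
    _ = b * a * c := by rw [hab, mul_assoc]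
    _ = a * c * c := by rw [← hb₃, hab]
    _ = c := by rw [hc₃, hc₂]

namespace Matrix

section StarOrdered

variable {k m R : Type*} [Fintype k] [DecidableEq k] [Fintype m]
  [PartialOrder R] [Ring R] [StarRing R] [StarOrderedRing R] [NoZeroDivisors R]
  {C : Matrix k m R} {Y : Matrix k k R}

theorem mul_conjTranspose_mul_mul_eq_self (h : C * Cᴴ * Y * (C * Cᴴ) = C * Cᴴ) :
    C * Cᴴ * Y * C = C := by
  have hzero : (C * Cᴴ * Y - 1) * (C * Cᴴ) = 0 := by rw [Matrix.sub_mul, h, Matrix.one_mul, sub_self]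
  rw [mul_self_mul_conjTranspose_eq_zero, Matrix.sub_mul, Matrix.one_mul, sub_eq_zero] at hzero
  exact hzero

theorem conjTranspose_mul_mul_mul_conjTranspose_eq_conjTranspose
    (h : C * Cᴴ * Y * (C * Cᴴ) = C * Cᴴ) : Cᴴ * Y * (C * Cᴴ) = Cᴴ := by
  have hzero : C * Cᴴ * (Y * (C * Cᴴ) - 1) = 0 := by
    rw [Matrix.mul_sub, Matrix.mul_one, ← Matrix.mul_assoc, h, sub_self]
  rw [self_mul_conjTranspose_mul_eq_zero, Matrix.mul_sub, Matrix.mul_one, sub_eq_zero,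
    ← Matrix.mul_assoc] at hzero
  exact hzero

end StarOrdered

end Matrix

theorem isGroupInverse_fromBlocks {k m : Type*} [Fintype k] [Fintype m]
    {C : Matrix k m ℝ} {Y : Matrix k k ℝ} (hY : IsGroupInverse (C * Cᵀ) Y) :
    IsGroupInverse (fromBlocks 0 C Cᵀ 0) (fromBlocks 0 (Y * C) (Cᵀ * Y) 0) := by
  classical
  obtain ⟨h₁, h₂, h₃⟩ := hY
  have hC : C * Cᵀ * Y * C = C := by
    rw [← conjTranspose_eq_transpose_of_trivial] at h₁ ⊢
    exact mul_conjTranspose_mul_mul_eq_self h₁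
  have hCt : Cᵀ * Y * (C * Cᵀ) = Cᵀ := by
    rw [← conjTranspose_eq_transpose_of_trivial] at h₁ ⊢
    exact conjTranspose_mul_mul_mul_conjTranspose_eq_conjTranspose h₁
  simp only [IsGroupInverse, fromBlocks_multiply, Matrix.zero_mul, Matrix.mul_zero, add_zero,
    zero_add, fromBlocks_inj, and_true, true_and]
  refine ⟨⟨?_, ?_⟩, ⟨?_, ?_⟩, ?_, (Matrix.mul_assoc _ _ _).symm⟩
  · rw [← Matrix.mul_assoc, hC]
  · rw [← Matrix.mul_assoc, Matrix.mul_assoc, hCt]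
  · rw [← Matrix.mul_assoc, Matrix.mul_assoc Y C, h₂]
  · rw [← Matrix.mul_assoc, Matrix.mul_assoc (Cᵀ * Y) C, hCt]
  · rw [← Matrix.mul_assoc, h₃, Matrix.mul_assoc]

theorem group_inverse_bipartite {k m : Type*} [Fintype k] [Fintype m]
    (C : Matrix k m ℝ) (Y : Matrix k k ℝ)
    (hY : IsGroupInverse (C * Cᵀ) Y) :
    IsGroupInverse (Matrix.fromBlocks 0 C Cᵀ 0)
      (Matrix.fromBlocks 0 (Y * C) (Cᵀ * Y) 0) ∧
    ∀ X : Matrix (k ⊕ m) (k ⊕ m) ℝ,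
      IsGroupInverse (Matrix.fromBlocks 0 C Cᵀ 0) X →
        (∀ i j : k, X (Sum.inl i) (Sum.inl j) = 0) ∧
        (∀ i j : m, X (Sum.inr i) (Sum.inr j) = 0) := by
  have hGI := isGroupInverse_fromBlocks hY
  refine ⟨hGI, fun X hX => ?_⟩
  obtain rfl := groupInverse_unique hX hGI
  exact ⟨fun _ _ => rfl, fun _ _ => rfl⟩
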